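/- arXiv:2001.08469 — 3 statements merged into one kernel-verified Lean document; each statement's English description precedes it below -/
import Mathlib

section
/- Under the billiard polygon setup with h the support function of an ellipse and under the Joachimsthal hypothesis, letting αᵢ = π − 2δᵢ be the angles of the billiard polygon, one has Σ_{i=1}^{n} cos αᵢ = J·L − n. -/
/-!
Let `νᵢ = (-sin φᵢ, cos φᵢ)` be the unit normal of the `i`-th side, so that side `i` has length
`⟪M_{i+1} - Mᵢ, νᵢ⟫`. Summing by parts around the closed polygon, `L = ∑ ⟪Mᵢ, ν_{i-1} - νᵢ⟫`, and
since `φ_{i-1} = ψᵢ - δᵢ`, `φᵢ = ψᵢ + δᵢ`, the `h'` component of `Mᵢ` drops out: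
`⟪Mᵢ, ν_{i-1} - νᵢ⟫ = 2 h(ψᵢ) sin δᵢ`. The Joachimsthal relation turns `J · L` into `∑ 2 sin² δᵢ`,
and `cos (π - 2δ) = 2 sin² δ - 1`.
-/

open Real

open Finset RealInnerProductSpace

namespace BilliardPolygon

noncomputable abbrev unitVec (θ : ℝ) : EuclideanSpace ℝ (Fin 2) := WithLp.toLp 2 ![cos θ, sin θ]

noncomputable abbrev unitNormal (θ : ℝ) : EuclideanSpace ℝ (Fin 2) := WithLp.toLp 2 ![-sin θ, cos θ]

lemma inner_unitVec_unitNormal (ψ φ : ℝ) : ⟪unitVec ψ, unitNormal φ⟫ = sin (ψ - φ) := by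
  simp only [PiLp.inner_apply, RCLike.inner_apply, ringHom_apply, Fin.sum_univ_two,
    Matrix.cons_val_zero, Matrix.cons_val_one, Matrix.cons_val_fin_one, sin_sub]
  ring

lemma inner_unitNormal_unitNormal (ψ φ : ℝ) : ⟪unitNormal ψ, unitNormal φ⟫ = cos (ψ - φ) := by
  simp only [PiLp.inner_apply, RCLike.inner_apply, ringHom_apply, Fin.sum_univ_two,
    Matrix.cons_val_zero, Matrix.cons_val_one, Matrix.cons_val_fin_one, cos_sub]
  ring

lemma norm_unitNormal (φ : ℝ) : ‖unitNormal φ‖ = 1 := by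
  have h := inner_unitNormal_unitNormal φ φ
  rwa [sub_self, cos_zero, real_inner_self_eq_norm_sq,
    pow_eq_one_iff_of_nonneg (norm_nonneg _) two_ne_zero] at h

lemma unitNormal_add_two_pi (φ : ℝ) : unitNormal (φ + 2 * π) = unitNormal φ := by
  simp only [unitNormal, sin_add_two_pi, cos_add_two_pi]

lemma inner_supportPoint_unitNormal (a b ψ φ : ℝ) :
    ⟪a • unitVec ψ + b • unitNormal ψ, unitNormal φ⟫ = a * sin (ψ - φ) + b * cos (ψ - φ) := by
  rw [inner_add_left, real_inner_smul_left, real_inner_smul_left, inner_unitVec_unitNormal,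
    inner_unitNormal_unitNormal]

lemma inner_supportPoint_sub_unitNormal (a b ψ δ : ℝ) :
    ⟪a • unitVec ψ + b • unitNormal ψ, unitNormal (ψ - δ) - unitNormal (ψ + δ)⟫
      = 2 * a * sin δ := by
  rw [inner_sub_right, inner_supportPoint_unitNormal, inner_supportPoint_unitNormal]
  simp only [sub_sub_cancel, sub_add_cancel_left, sin_neg, cos_neg]
  ring

end BilliardPolygon

lemma norm_eq_inner_of_eq_smul {E : Type*} [NormedAddCommGroup E] [InnerProductSpace ℝ E]
    {x v : E} {t : ℝ} (hv : ‖v‖ = 1) (ht : 0 ≤ t) (hx : x = t • v) : ‖x‖ = ⟪x, v⟫ := by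
  rw [hx, norm_smul, hv, real_inner_smul_left, real_inner_self_eq_norm_sq, hv,
    Real.norm_of_nonneg ht]
  ring

lemma Finset.sum_Icc_one_succ_of_eq {M : Type*} [AddCommMonoid M] (f : ℕ → M) (n : ℕ)
    (hf : f (n + 1) = f 1) : ∑ i ∈ Icc 1 n, f (i + 1) = ∑ i ∈ Icc 1 n, f i := by
  have to_range (g : ℕ → M) : ∑ i ∈ Icc 1 n, g i = ∑ k ∈ range n, g (k + 1) := by
    rw [← Ico_add_one_right_eq_Icc, sum_Ico_eq_sum_range]
    simp only [add_tsub_cancel_right, add_comm 1]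
  rw [to_range, to_range]
  cases n with
  | zero => rfl
  | succ m => rw [sum_range_succ, sum_range_succ' _ m, hf, zero_add]

lemma sum_inner_sub_cyclic {E : Type*} [NormedAddCommGroup E] [InnerProductSpace ℝ E]
    (M v : ℕ → E) (n : ℕ) (hM : M (n + 1) = M 1) (hv : v n = v 0) :
    ∑ i ∈ Icc 1 n, ⟪M (i + 1) - M i, v i⟫ = ∑ i ∈ Icc 1 n, ⟪M i, v (i - 1) - v i⟫ := by
  have shift := sum_Icc_one_succ_of_eq (fun i => ⟪M i, v (i - 1)⟫) n (by simp [hM, hv])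
  simp only [Nat.add_sub_cancel] at shift
  simp only [inner_sub_left, inner_sub_right, sum_sub_distrib, shift]

lemma Real.cos_pi_sub_two_mul (x : ℝ) : cos (π - 2 * x) = 2 * sin x ^ 2 - 1 := by
  rw [cos_pi_sub, cos_two_mul, cos_sq']
  ring

open BilliardPolygon

theorem stmt_5_general
    (h : ℝ → ℝ)
    (n : ℕ)
    (φ ψ δ : ℕ → ℝ)
    (hφ : φ n = φ 0 + 2 * Real.pi)
    (hψ : ∀ i ∈ Finset.Icc 1 n, ψ i = (φ (i - 1) + φ i) / 2)
    (hδ : ∀ i ∈ Finset.Icc 1 n, δ i = (φ i - φ (i - 1)) / 2)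
    (M : ℕ → EuclideanSpace ℝ (Fin 2))
    (hM : ∀ i ∈ Finset.Icc 1 n, M i
        = h (ψ i) • (WithLp.toLp 2 ![Real.cos (ψ i), Real.sin (ψ i)] : EuclideanSpace ℝ (Fin 2))
        + deriv h (ψ i) • (WithLp.toLp 2 ![-Real.sin (ψ i), Real.cos (ψ i)] : EuclideanSpace ℝ (Fin 2)))
    (hMwrap : M (n + 1) = M 1)
    (chord : ∀ i ∈ Finset.Icc 1 n, ∃ t : ℝ, 0 < t ∧
        M (i + 1) - M i = t • (WithLp.toLp 2 ![-Real.sin (φ i), Real.cos (φ i)] : EuclideanSpace ℝ (Fin 2)))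
    (J : ℝ)
    (hJoach : ∀ i ∈ Finset.Icc 1 n, Real.sin (δ i) = J * h (ψ i))
    (L : ℝ) (hL : L = ∑ i ∈ Finset.Icc 1 n, ‖M (i + 1) - M i‖)
    : ∑ i ∈ Finset.Icc 1 n, Real.cos (Real.pi - 2 * δ i) = J * L - n := by
  have side_length :
      ∀ i ∈ Icc 1 n, ‖M (i + 1) - M i‖ = ⟪M (i + 1) - M i, unitNormal (φ i)⟫ := by
    intro i hi
    obtain ⟨t, ht, hchord⟩ := chord i hi
    exact norm_eq_inner_of_eq_smul (norm_unitNormal _) ht.le hchord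
  have vertex : ∀ i ∈ Icc 1 n,
      ⟪M i, unitNormal (φ (i - 1)) - unitNormal (φ i)⟫ = 2 * h (ψ i) * sin (δ i) := by
    intro i hi
    have hprev : φ (i - 1) = ψ i - δ i := by rw [hψ i hi, hδ i hi]; ring
    have hnext : φ i = ψ i + δ i := by rw [hψ i hi, hδ i hi]; ring
    rw [hM i hi, hprev, hnext, inner_supportPoint_sub_unitNormal]
  have perimeter : L = ∑ i ∈ Icc 1 n, 2 * h (ψ i) * sin (δ i) := by
    rw [hL, sum_congr rfl side_length,
      sum_inner_sub_cyclic M (fun i => unitNormal (φ i)) n hMwrap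
        (by simp only [hφ, unitNormal_add_two_pi]),
      sum_congr rfl vertex]
  calc ∑ i ∈ Icc 1 n, cos (π - 2 * δ i)
      = ∑ i ∈ Icc 1 n, (J * (2 * h (ψ i) * sin (δ i)) - 1) := by
        refine sum_congr rfl fun i hi => ?_
        rw [cos_pi_sub_two_mul, hJoach i hi]
        ring
    _ = J * L - n := by simp [sum_sub_distrib, mul_sum, perimeter]

/-- Corollary: with `αᵢ = π - 2 δᵢ` the angles of the billiard polygon, `∑ cos αᵢ = J·L - n`. -/
theorem stmt_5
    (a₁ a₂ : ℝ) (ha₁ : 0 < a₁) (ha₂ : 0 < a₂)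
    (h : ℝ → ℝ)
    (hh : ∀ x : ℝ, h x = Real.sqrt (a₁ ^ 2 * Real.cos x ^ 2 + a₂ ^ 2 * Real.sin x ^ 2))
    (n : ℕ) (hn : 2 ≤ n)
    (φ ψ δ : ℕ → ℝ)
    (hφ : φ n = φ 0 + 2 * Real.pi)
    (hψ : ∀ i ∈ Finset.Icc 1 n, ψ i = (φ (i - 1) + φ i) / 2)
    (hδ : ∀ i ∈ Finset.Icc 1 n, δ i = (φ i - φ (i - 1)) / 2)
    (M : ℕ → EuclideanSpace ℝ (Fin 2))
    (hM : ∀ i ∈ Finset.Icc 1 n, M i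
        = h (ψ i) • (WithLp.toLp 2 ![Real.cos (ψ i), Real.sin (ψ i)] : EuclideanSpace ℝ (Fin 2))
        + deriv h (ψ i) • (WithLp.toLp 2 ![-Real.sin (ψ i), Real.cos (ψ i)] : EuclideanSpace ℝ (Fin 2)))
    (hMwrap : M (n + 1) = M 1)
    (chord : ∀ i ∈ Finset.Icc 1 n, ∃ t : ℝ, 0 < t ∧
        M (i + 1) - M i = t • (WithLp.toLp 2 ![-Real.sin (φ i), Real.cos (φ i)] : EuclideanSpace ℝ (Fin 2)))
    (J : ℝ) (hJ : 0 < J)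
    (hJoach : ∀ i ∈ Finset.Icc 1 n, Real.sin (δ i) = J * h (ψ i))
    (L : ℝ) (hL : L = ∑ i ∈ Finset.Icc 1 n, ‖M (i + 1) - M i‖)
    : ∑ i ∈ Finset.Icc 1 n, Real.cos (Real.pi - 2 * δ i) = J * L - n :=
  stmt_5_general h n φ ψ δ hφ hψ hδ M hM hMwrap chord J hJoach L hL
end

section
/- Under the billiard polygon setup with h the support function of an ellipse with a₁ ≠ a₂ and under the Joachimsthal hypothesis, let P = (p, q) ∈ ℝ² and let Qᵢ = P + (h(ψᵢ) − ⟨P, nᵢ⟩)·nᵢ, where nᵢ = (cos ψᵢ, sin ψᵢ), be the foot of the perpendicular from P to the tangent line to the ellipse at Mᵢ. Then Σ_{i=1}^{n} Qᵢ = (p·(n − C)/2, q·(n + C)/2), where C = (L/J − n·(a₁² + a₂²))/(a₁² − a₂²). In particular, the center of mass of the points Qᵢ depends only on P, n, J and L. -/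
/-!
By the support-function formula, `Mᵢ = (a₁² cos ψᵢ, a₂² sin ψᵢ) / h(ψᵢ)`. Since
`sin φᵢ - sin φᵢ₋₁ = 2 sin δᵢ cos ψᵢ` (and similarly for cosines), the Joachimsthal relation
`sin δᵢ = J h(ψᵢ)` turns `Σ h(ψᵢ) (cos ψᵢ, sin ψᵢ)` into a telescoping sum, which vanishes.
Summing by parts along the closed polygon, whose sides are orthogonal to `(cos φᵢ, sin φᵢ)`,
gives `Σ sin 2ψᵢ = 0`, and pairing each side with its unit direction gives
`L = J (n (a₁² + a₂²) + (a₁² - a₂²) Σ cos 2ψᵢ)`, i.e. `Σ cos 2ψᵢ = C`. Both coordinates of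
`Σ Qᵢ` are linear combinations of these four sums.
-/

open Real Finset
open scoped RealInnerProductSpace

lemma Finset.sum_Icc_one_shift_of_wrap {G : Type*} [AddCommGroup G] {f : ℕ → G} {n : ℕ}
    (hf : f (n + 1) = f 1) : ∑ i ∈ Icc 1 n, f (i + 1) = ∑ i ∈ Icc 1 n, f i := by
  rw [← sub_eq_zero, ← sum_sub_distrib, ← Ico_add_one_right_eq_Icc, sum_Ico_sub f (by omega), hf,
    sub_self]

lemma Finset.sum_Icc_one_sub_pred_eq_zero {G : Type*} [AddCommGroup G] {f : ℕ → G} {n : ℕ}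
    (hf : f n = f 0) : ∑ i ∈ Icc 1 n, (f i - f (i - 1)) = 0 := by
  rw [sum_sub_distrib, sub_eq_zero]
  have hshift := sum_Icc_one_shift_of_wrap (f := fun j ↦ f (j - 1)) (n := n) (by simpa using hf)
  simpa only [Nat.add_sub_cancel] using hshift

lemma inner_toLp_two (x₀ x₁ y₀ y₁ : ℝ) :
    ⟪(!₂[x₀, x₁] : EuclideanSpace ℝ (Fin 2)), !₂[y₀, y₁]⟫ = x₀ * y₀ + x₁ * y₁ := by
  simp [EuclideanSpace.inner_toLp_toLp, dotProduct, Fin.sum_univ_two, mul_comm]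

lemma norm_toLp_neg_sin_cos (θ : ℝ) : ‖(!₂[-sin θ, cos θ] : EuclideanSpace ℝ (Fin 2))‖ = 1 := by
  simp [EuclideanSpace.norm_eq, Fin.sum_univ_two]

section ClosedAngles

variable {φ ψ δ : ℕ → ℝ} {n : ℕ}

lemma sum_sin_mul_cos_eq_zero (hφ : φ n = φ 0 + 2 * π)
    (hψ : ∀ i ∈ Icc 1 n, ψ i = (φ (i - 1) + φ i) / 2)
    (hδ : ∀ i ∈ Icc 1 n, δ i = (φ i - φ (i - 1)) / 2) :
    ∑ i ∈ Icc 1 n, sin (δ i) * cos (ψ i) = 0 := by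
  have hterm : ∀ i ∈ Icc 1 n, sin (δ i) * cos (ψ i) = (sin (φ i) - sin (φ (i - 1))) / 2 := by
    intro i hi
    rw [sin_sub_sin, hψ i hi, hδ i hi, add_comm (φ (i - 1))]
    ring
  rw [sum_congr rfl hterm, ← sum_div,
    sum_Icc_one_sub_pred_eq_zero (f := fun j ↦ sin (φ j)) (by simp [hφ]), zero_div]

lemma sum_sin_mul_sin_eq_zero (hφ : φ n = φ 0 + 2 * π)
    (hψ : ∀ i ∈ Icc 1 n, ψ i = (φ (i - 1) + φ i) / 2)
    (hδ : ∀ i ∈ Icc 1 n, δ i = (φ i - φ (i - 1)) / 2) :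
    ∑ i ∈ Icc 1 n, sin (δ i) * sin (ψ i) = 0 := by
  have hterm : ∀ i ∈ Icc 1 n, sin (δ i) * sin (ψ i) = -(cos (φ i) - cos (φ (i - 1))) / 2 := by
    intro i hi
    rw [cos_sub_cos, hψ i hi, hδ i hi, add_comm (φ (i - 1))]
    ring
  rw [sum_congr rfl hterm, ← sum_div, sum_neg_distrib,
    sum_Icc_one_sub_pred_eq_zero (f := fun j ↦ cos (φ j)) (by simp [hφ]), neg_zero, zero_div]

end ClosedAngles

section Ellipse

variable {a₁ a₂ : ℝ}

noncomputable def ellipseSupport (a₁ a₂ ψ : ℝ) : ℝ := √(a₁ ^ 2 * cos ψ ^ 2 + a₂ ^ 2 * sin ψ ^ 2)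

/-- The point of the ellipse `x₁²/a₁² + x₂²/a₂² = 1` with outer normal `(cos ψ, sin ψ)`. -/
noncomputable def ellipsePoint (a₁ a₂ ψ : ℝ) : EuclideanSpace ℝ (Fin 2) :=
  !₂[a₁ ^ 2 * cos ψ / ellipseSupport a₁ a₂ ψ, a₂ ^ 2 * sin ψ / ellipseSupport a₁ a₂ ψ]

lemma sq_ellipseSupport (a₁ a₂ ψ : ℝ) :
    ellipseSupport a₁ a₂ ψ ^ 2 = a₁ ^ 2 * cos ψ ^ 2 + a₂ ^ 2 * sin ψ ^ 2 :=
  sq_sqrt (by positivity)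

lemma ellipseSupport_radicand_pos (h₁ : a₁ ≠ 0) (h₂ : a₂ ≠ 0) (ψ : ℝ) :
    0 < a₁ ^ 2 * cos ψ ^ 2 + a₂ ^ 2 * sin ψ ^ 2 := by
  have hmin : 0 < min (a₁ ^ 2) (a₂ ^ 2) := lt_min (by positivity) (by positivity)
  calc 0 < min (a₁ ^ 2) (a₂ ^ 2) * (cos ψ ^ 2 + sin ψ ^ 2) := by rwa [cos_sq_add_sin_sq, mul_one]
    _ ≤ a₁ ^ 2 * cos ψ ^ 2 + a₂ ^ 2 * sin ψ ^ 2 := by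
      rw [mul_add]
      gcongr
      exacts [min_le_left _ _, min_le_right _ _]

lemma ellipseSupport_pos (h₁ : a₁ ≠ 0) (h₂ : a₂ ≠ 0) (ψ : ℝ) : 0 < ellipseSupport a₁ a₂ ψ :=
  sqrt_pos.2 (ellipseSupport_radicand_pos h₁ h₂ ψ)

lemma hasDerivAt_ellipseSupport (h₁ : a₁ ≠ 0) (h₂ : a₂ ≠ 0) (ψ : ℝ) :
    HasDerivAt (ellipseSupport a₁ a₂)
      ((a₂ ^ 2 - a₁ ^ 2) * sin ψ * cos ψ / ellipseSupport a₁ a₂ ψ) ψ := by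
  have hrad : HasDerivAt (fun x ↦ a₁ ^ 2 * cos x ^ 2 + a₂ ^ 2 * sin x ^ 2)
      (a₁ ^ 2 * (2 * cos ψ ^ 1 * -sin ψ) + a₂ ^ 2 * (2 * sin ψ ^ 1 * cos ψ)) ψ :=
    (((hasDerivAt_cos ψ).pow 2).const_mul _).add (((hasDerivAt_sin ψ).pow 2).const_mul _)
  have hsqrt : HasDerivAt (ellipseSupport a₁ a₂)
      ((a₁ ^ 2 * (2 * cos ψ ^ 1 * -sin ψ) + a₂ ^ 2 * (2 * sin ψ ^ 1 * cos ψ))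
        / (2 * ellipseSupport a₁ a₂ ψ)) ψ :=
    hrad.sqrt (ellipseSupport_radicand_pos h₁ h₂ ψ).ne'
  convert hsqrt using 1
  have hpos := (ellipseSupport_pos h₁ h₂ ψ).ne'
  field_simp
  ring

lemma ellipseSupport_smul_add_deriv_smul (h₁ : a₁ ≠ 0) (h₂ : a₂ ≠ 0) (ψ : ℝ) :
    ellipseSupport a₁ a₂ ψ • !₂[cos ψ, sin ψ]
      + deriv (ellipseSupport a₁ a₂) ψ • !₂[-sin ψ, cos ψ] = ellipsePoint a₁ a₂ ψ := by
  have hpos := (ellipseSupport_pos h₁ h₂ ψ).ne'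
  have hsq := sq_ellipseSupport a₁ a₂ ψ
  have hpy := sin_sq_add_cos_sq ψ
  rw [(hasDerivAt_ellipseSupport h₁ h₂ ψ).deriv, ellipsePoint]
  ext k
  fin_cases k
  · simp only [Fin.zero_eta, PiLp.add_apply, PiLp.smul_apply, Matrix.cons_val_zero, smul_eq_mul]
    field_simp
    linear_combination cos ψ * hsq + a₁ ^ 2 * cos ψ * hpy
  · simp only [Fin.mk_one, PiLp.add_apply, PiLp.smul_apply, Matrix.cons_val_one,
      Matrix.cons_val_zero, smul_eq_mul]
    field_simp
    linear_combination sin ψ * hsq + a₂ ^ 2 * sin ψ * hpy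

variable {ψ δ J : ℝ}

lemma inner_ellipsePoint_cos_sin_sub (h₁ : a₁ ≠ 0) (h₂ : a₂ ≠ 0)
    (hJ : sin δ = J * ellipseSupport a₁ a₂ ψ) :
    ⟪ellipsePoint a₁ a₂ ψ, !₂[cos (ψ - δ), sin (ψ - δ)] - !₂[cos (ψ + δ), sin (ψ + δ)]⟫
      = J * ((a₁ ^ 2 - a₂ ^ 2) * sin (2 * ψ)) := by
  have hpos := (ellipseSupport_pos h₁ h₂ ψ).ne'
  rw [ellipsePoint, ← WithLp.toLp_sub, Matrix.cons_sub_cons, Matrix.cons_sub_cons,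
    Matrix.empty_sub_empty, inner_toLp_two, cos_sub, cos_add, sin_sub, sin_add, sin_two_mul, hJ]
  field_simp
  ring

lemma inner_ellipsePoint_neg_sin_cos_sub (h₁ : a₁ ≠ 0) (h₂ : a₂ ≠ 0)
    (hJ : sin δ = J * ellipseSupport a₁ a₂ ψ) :
    ⟪ellipsePoint a₁ a₂ ψ, !₂[-sin (ψ - δ), cos (ψ - δ)] - !₂[-sin (ψ + δ), cos (ψ + δ)]⟫
      = J * (a₁ ^ 2 + a₂ ^ 2 + (a₁ ^ 2 - a₂ ^ 2) * cos (2 * ψ)) := by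
  have hpos := (ellipseSupport_pos h₁ h₂ ψ).ne'
  rw [ellipsePoint, ← WithLp.toLp_sub, Matrix.cons_sub_cons, Matrix.cons_sub_cons,
    Matrix.empty_sub_empty, inner_toLp_two, cos_sub, cos_add, sin_sub, sin_add, cos_two_mul, hJ]
  field_simp
  linear_combination 2 * ellipseSupport a₁ a₂ ψ * J * a₂ ^ 2 * sin_sq_add_cos_sq ψ

end Ellipse

section ClosedPolygon

variable {E : Type*} [NormedAddCommGroup E] [InnerProductSpace ℝ E] {M w : ℕ → E} {n : ℕ}

lemma sum_inner_sub_succ_eq_sum_inner_pred_sub (hM : M (n + 1) = M 1) (hw : w n = w 0) :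
    ∑ i ∈ Icc 1 n, ⟪M (i + 1) - M i, w i⟫ = ∑ i ∈ Icc 1 n, ⟪M i, w (i - 1) - w i⟫ := by
  have hshift : ∑ i ∈ Icc 1 n, ⟪M (i + 1), w i⟫ = ∑ i ∈ Icc 1 n, ⟪M i, w (i - 1)⟫ :=
    sum_Icc_one_shift_of_wrap (f := fun j ↦ ⟪M j, w (j - 1)⟫) (by simp [hM, hw])
  simp only [inner_sub_left, inner_sub_right, sum_sub_distrib, hshift]

lemma inner_eq_norm_of_eq_smul {x v : E} {t : ℝ} (ht : 0 ≤ t) (hv : ‖v‖ = 1) (hx : x = t • v) : ⟪x, v⟫ = ‖x‖ := by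
  rw [hx, inner_smul_left, real_inner_self_eq_norm_sq, norm_smul, hv, Real.norm_of_nonneg ht]
  simp

lemma sum_norm_sub_eq_sum_inner_pred_sub (hM : M (n + 1) = M 1) (hw : w n = w 0)
    (hw_norm : ∀ i ∈ Icc 1 n, ‖w i‖ = 1)
    (hchord : ∀ i ∈ Icc 1 n, ∃ t : ℝ, 0 ≤ t ∧ M (i + 1) - M i = t • w i) :
    ∑ i ∈ Icc 1 n, ‖M (i + 1) - M i‖ = ∑ i ∈ Icc 1 n, ⟪M i, w (i - 1) - w i⟫ := by
  rw [← sum_inner_sub_succ_eq_sum_inner_pred_sub hM hw]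
  refine sum_congr rfl fun i hi ↦ ?_
  obtain ⟨t, ht, hMt⟩ := hchord i hi
  exact (inner_eq_norm_of_eq_smul ht (hw_norm i hi) hMt).symm

lemma sum_inner_pred_sub_eq_zero (hM : M (n + 1) = M 1) (hw : w n = w 0)
    (horth : ∀ i ∈ Icc 1 n, ⟪M (i + 1) - M i, w i⟫ = 0) :
    ∑ i ∈ Icc 1 n, ⟪M i, w (i - 1) - w i⟫ = 0 := by
  rw [← sum_inner_sub_succ_eq_sum_inner_pred_sub hM hw, sum_eq_zero horth]

end ClosedPolygon

lemma sum_foot_cos_sin_eq {ι : Type*} (s : Finset ι) (x ψ : ι → ℝ) (p q C : ℝ)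
    (hcos : ∑ i ∈ s, x i * cos (ψ i) = 0) (hsin : ∑ i ∈ s, x i * sin (ψ i) = 0)
    (hsin_two : ∑ i ∈ s, sin (2 * ψ i) = 0) (hcos_two : ∑ i ∈ s, cos (2 * ψ i) = C) :
    ∑ i ∈ s, (!₂[p, q] + (x i - ⟪!₂[p, q], !₂[cos (ψ i), sin (ψ i)]⟫) • !₂[cos (ψ i), sin (ψ i)])
      = (!₂[p * (#s - C) / 2, q * (#s + C) / 2] : EuclideanSpace ℝ (Fin 2)) := by
  ext k
  rw [WithLp.ofLp_sum, Finset.sum_apply]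
  fin_cases k
  · simp only [Fin.zero_eta, PiLp.add_apply, PiLp.smul_apply, inner_toLp_two, smul_eq_mul,
      Matrix.cons_val_zero]
    calc ∑ i ∈ s, (p + (x i - (p * cos (ψ i) + q * sin (ψ i))) * cos (ψ i))
        = ∑ i ∈ s, (p / 2 - p / 2 * cos (2 * ψ i) - q / 2 * sin (2 * ψ i) + x i * cos (ψ i)) :=
          sum_congr rfl fun i _ ↦ by rw [cos_two_mul, sin_two_mul]; ring
      _ = p * (#s - C) / 2 := by
          simp only [sum_add_distrib, sum_sub_distrib, ← mul_sum, sum_const, nsmul_eq_mul, hcos,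
            hsin_two, hcos_two]
          ring
  · simp only [Fin.mk_one, PiLp.add_apply, PiLp.smul_apply, inner_toLp_two, smul_eq_mul,
      Matrix.cons_val_one, Matrix.cons_val_zero]
    calc ∑ i ∈ s, (q + (x i - (p * cos (ψ i) + q * sin (ψ i))) * sin (ψ i))
        = ∑ i ∈ s, (q / 2 + q / 2 * cos (2 * ψ i) - p / 2 * sin (2 * ψ i) + x i * sin (ψ i)) :=
          sum_congr rfl fun i _ ↦ by
            rw [cos_two_mul, sin_two_mul]; linear_combination (-q) * sin_sq_add_cos_sq (ψ i)
      _ = q * (#s + C) / 2 := by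
          simp only [sum_add_distrib, sum_sub_distrib, ← mul_sum, sum_const, nsmul_eq_mul, hsin,
            hsin_two, hcos_two]
          ring

section EllipticBilliard

variable {a₁ a₂ J : ℝ} {φ ψ δ : ℕ → ℝ} {n : ℕ} {M : ℕ → EuclideanSpace ℝ (Fin 2)}

lemma sum_sin_two_mul_eq_zero_of_ellipsePoint (h₁ : a₁ ≠ 0) (h₂ : a₂ ≠ 0) (ha : a₁ ^ 2 ≠ a₂ ^ 2)
    (hJ : J ≠ 0) (hφ : φ n = φ 0 + 2 * π) (hψ : ∀ i ∈ Icc 1 n, ψ i = (φ (i - 1) + φ i) / 2)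
    (hδ : ∀ i ∈ Icc 1 n, δ i = (φ i - φ (i - 1)) / 2)
    (hM : ∀ i ∈ Icc 1 n, M i = ellipsePoint a₁ a₂ (ψ i)) (hMwrap : M (n + 1) = M 1)
    (hchord : ∀ i ∈ Icc 1 n, ∃ t : ℝ, M (i + 1) - M i = t • !₂[-sin (φ i), cos (φ i)])
    (hJoach : ∀ i ∈ Icc 1 n, sin (δ i) = J * ellipseSupport a₁ a₂ (ψ i)) :
    ∑ i ∈ Icc 1 n, sin (2 * ψ i) = 0 := by
  have hsum := sum_inner_pred_sub_eq_zero (w := fun i ↦ !₂[cos (φ i), sin (φ i)]) hMwrap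
    (by simp [hφ]) fun i hi ↦ by
      obtain ⟨t, ht⟩ := hchord i hi
      rw [ht, inner_smul_left, inner_toLp_two]
      ring
  rw [sum_congr rfl fun i hi ↦ by
      rw [hM i hi, show φ (i - 1) = ψ i - δ i by linarith [hψ i hi, hδ i hi],
        show φ i = ψ i + δ i by linarith [hψ i hi, hδ i hi],
        inner_ellipsePoint_cos_sin_sub h₁ h₂ (hJoach i hi)],
    ← mul_sum, ← mul_sum, mul_eq_zero_iff_left hJ, mul_eq_zero_iff_left (sub_ne_zero.2 ha)] at hsum
  exact hsum

lemma sum_norm_sub_eq_of_ellipsePoint (h₁ : a₁ ≠ 0) (h₂ : a₂ ≠ 0)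
    (hφ : φ n = φ 0 + 2 * π) (hψ : ∀ i ∈ Icc 1 n, ψ i = (φ (i - 1) + φ i) / 2)
    (hδ : ∀ i ∈ Icc 1 n, δ i = (φ i - φ (i - 1)) / 2)
    (hM : ∀ i ∈ Icc 1 n, M i = ellipsePoint a₁ a₂ (ψ i)) (hMwrap : M (n + 1) = M 1)
    (hchord : ∀ i ∈ Icc 1 n, ∃ t : ℝ, 0 ≤ t ∧ M (i + 1) - M i = t • !₂[-sin (φ i), cos (φ i)])
    (hJoach : ∀ i ∈ Icc 1 n, sin (δ i) = J * ellipseSupport a₁ a₂ (ψ i)) :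
    ∑ i ∈ Icc 1 n, ‖M (i + 1) - M i‖
      = J * (n * (a₁ ^ 2 + a₂ ^ 2) + (a₁ ^ 2 - a₂ ^ 2) * ∑ i ∈ Icc 1 n, cos (2 * ψ i)) := by
  rw [sum_norm_sub_eq_sum_inner_pred_sub (w := fun i ↦ !₂[-sin (φ i), cos (φ i)]) hMwrap
    (by simp [hφ]) (fun i _ ↦ norm_toLp_neg_sin_cos _) hchord]
  rw [sum_congr rfl fun i hi ↦ by
      rw [hM i hi, show φ (i - 1) = ψ i - δ i by linarith [hψ i hi, hδ i hi],
        show φ i = ψ i + δ i by linarith [hψ i hi, hδ i hi],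
        inner_ellipsePoint_neg_sin_cos_sub h₁ h₂ (hJoach i hi)],
    ← mul_sum, sum_add_distrib, sum_const, ← mul_sum, Nat.card_Icc, Nat.add_sub_cancel, nsmul_eq_mul]

end EllipticBilliard

theorem stmt_12_general
    (a₁ a₂ : ℝ) (ha₁ : 0 < a₁) (ha₂ : 0 < a₂)
    (h : ℝ → ℝ)
    (hh : ∀ x : ℝ, h x = Real.sqrt (a₁ ^ 2 * Real.cos x ^ 2 + a₂ ^ 2 * Real.sin x ^ 2))
    (n : ℕ)
    (φ ψ δ : ℕ → ℝ)
    (hφ : φ n = φ 0 + 2 * Real.pi)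
    (hψ : ∀ i ∈ Finset.Icc 1 n, ψ i = (φ (i - 1) + φ i) / 2)
    (hδ : ∀ i ∈ Finset.Icc 1 n, δ i = (φ i - φ (i - 1)) / 2)
    (M : ℕ → EuclideanSpace ℝ (Fin 2))
    (hM : ∀ i ∈ Finset.Icc 1 n, M i
        = h (ψ i) • (WithLp.toLp 2 ![Real.cos (ψ i), Real.sin (ψ i)] : EuclideanSpace ℝ (Fin 2))
        + deriv h (ψ i) • (WithLp.toLp 2 ![-Real.sin (ψ i), Real.cos (ψ i)] : EuclideanSpace ℝ (Fin 2)))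
    (hMwrap : M (n + 1) = M 1)
    (chord : ∀ i ∈ Finset.Icc 1 n, ∃ t : ℝ, 0 < t ∧
        M (i + 1) - M i = t • (WithLp.toLp 2 ![-Real.sin (φ i), Real.cos (φ i)] : EuclideanSpace ℝ (Fin 2)))
    (J : ℝ) (hJ : 0 < J)
    (hJoach : ∀ i ∈ Finset.Icc 1 n, Real.sin (δ i) = J * h (ψ i))
    (ha : a₁ ≠ a₂)
    (L : ℝ) (hL : L = ∑ i ∈ Finset.Icc 1 n, ‖M (i + 1) - M i‖)
    (p q : ℝ) (P : EuclideanSpace ℝ (Fin 2)) (hP : P = WithLp.toLp 2 ![p, q])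
    (N : ℕ → EuclideanSpace ℝ (Fin 2))
    (hN : ∀ i ∈ Finset.Icc 1 n, N i = WithLp.toLp 2 ![Real.cos (ψ i), Real.sin (ψ i)])
    (Q : ℕ → EuclideanSpace ℝ (Fin 2))
    (hQ : ∀ i ∈ Finset.Icc 1 n, Q i = P + (h (ψ i) - (inner ℝ P (N i) : ℝ)) • N i)
    (C : ℝ) (hC : C = (L / J - n * (a₁ ^ 2 + a₂ ^ 2)) / (a₁ ^ 2 - a₂ ^ 2))
    : ∑ i ∈ Finset.Icc 1 n, Q i
      = (WithLp.toLp 2 ![p * (n - C) / 2, q * (n + C) / 2] : EuclideanSpace ℝ (Fin 2)) := by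
  obtain rfl : h = ellipseSupport a₁ a₂ := funext hh
  have h₁ := ha₁.ne'
  have h₂ := ha₂.ne'
  have ha_sq : a₁ ^ 2 ≠ a₂ ^ 2 := by rwa [Ne, sq_eq_sq₀ ha₁.le ha₂.le]
  have hMψ (i) (hi : i ∈ Icc 1 n) : M i = ellipsePoint a₁ a₂ (ψ i) :=
    (hM i hi).trans (ellipseSupport_smul_add_deriv_smul h₁ h₂ _)
  have hcos : ∑ i ∈ Icc 1 n, ellipseSupport a₁ a₂ (ψ i) * cos (ψ i) = 0 := by
    rw [← mul_eq_zero_iff_left hJ.ne', mul_sum, ← sum_sin_mul_cos_eq_zero hφ hψ hδ]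
    exact sum_congr rfl fun i hi ↦ by rw [hJoach i hi, mul_assoc]
  have hsin : ∑ i ∈ Icc 1 n, ellipseSupport a₁ a₂ (ψ i) * sin (ψ i) = 0 := by
    rw [← mul_eq_zero_iff_left hJ.ne', mul_sum, ← sum_sin_mul_sin_eq_zero hφ hψ hδ]
    exact sum_congr rfl fun i hi ↦ by rw [hJoach i hi, mul_assoc]
  have hsin_two := sum_sin_two_mul_eq_zero_of_ellipsePoint h₁ h₂ ha_sq hJ.ne' hφ hψ hδ hMψ hMwrap
    (fun i hi ↦ (chord i hi).imp fun _ ↦ And.right) hJoach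
  have hcos_two : ∑ i ∈ Icc 1 n, cos (2 * ψ i) = C := by
    rw [hC, hL, sum_norm_sub_eq_of_ellipsePoint h₁ h₂ hφ hψ hδ hMψ hMwrap
      (fun i hi ↦ (chord i hi).imp fun _ ht ↦ ⟨ht.1.le, ht.2⟩) hJoach]
    field_simp [sub_ne_zero.2 ha_sq]
    ring
  rw [sum_congr rfl fun i hi ↦ by rw [hQ i hi, hN i hi, hP]]
  simpa using sum_foot_cos_sin_eq _ _ _ p q C hcos hsin hsin_two hcos_two

/-- Sum of the feet of perpendiculars from a point `P = (p,q)` to the tangent lines: `∑ Qᵢ = (p(n-C)/2, q(n+C)/2)` with `C = (L/J - n(a₁²+a₂²))/(a₁²-a₂²)`. -/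
theorem stmt_12
    (a₁ a₂ : ℝ) (ha₁ : 0 < a₁) (ha₂ : 0 < a₂)
    (h : ℝ → ℝ)
    (hh : ∀ x : ℝ, h x = Real.sqrt (a₁ ^ 2 * Real.cos x ^ 2 + a₂ ^ 2 * Real.sin x ^ 2))
    (n : ℕ) (hn : 2 ≤ n)
    (φ ψ δ : ℕ → ℝ)
    (hφ : φ n = φ 0 + 2 * Real.pi)
    (hψ : ∀ i ∈ Finset.Icc 1 n, ψ i = (φ (i - 1) + φ i) / 2)
    (hδ : ∀ i ∈ Finset.Icc 1 n, δ i = (φ i - φ (i - 1)) / 2)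
    (M : ℕ → EuclideanSpace ℝ (Fin 2))
    (hM : ∀ i ∈ Finset.Icc 1 n, M i
        = h (ψ i) • (WithLp.toLp 2 ![Real.cos (ψ i), Real.sin (ψ i)] : EuclideanSpace ℝ (Fin 2))
        + deriv h (ψ i) • (WithLp.toLp 2 ![-Real.sin (ψ i), Real.cos (ψ i)] : EuclideanSpace ℝ (Fin 2)))
    (hMwrap : M (n + 1) = M 1)
    (chord : ∀ i ∈ Finset.Icc 1 n, ∃ t : ℝ, 0 < t ∧
        M (i + 1) - M i = t • (WithLp.toLp 2 ![-Real.sin (φ i), Real.cos (φ i)] : EuclideanSpace ℝ (Fin 2)))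
    (J : ℝ) (hJ : 0 < J)
    (hJoach : ∀ i ∈ Finset.Icc 1 n, Real.sin (δ i) = J * h (ψ i))
    (ha : a₁ ≠ a₂)
    (L : ℝ) (hL : L = ∑ i ∈ Finset.Icc 1 n, ‖M (i + 1) - M i‖)
    (p q : ℝ) (P : EuclideanSpace ℝ (Fin 2)) (hP : P = WithLp.toLp 2 ![p, q])
    (N : ℕ → EuclideanSpace ℝ (Fin 2))
    (hN : ∀ i ∈ Finset.Icc 1 n, N i = WithLp.toLp 2 ![Real.cos (ψ i), Real.sin (ψ i)])
    (Q : ℕ → EuclideanSpace ℝ (Fin 2))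
    (hQ : ∀ i ∈ Finset.Icc 1 n, Q i = P + (h (ψ i) - (inner ℝ P (N i) : ℝ)) • N i)
    (C : ℝ) (hC : C = (L / J - n * (a₁ ^ 2 + a₂ ^ 2)) / (a₁ ^ 2 - a₂ ^ 2))
    : ∑ i ∈ Finset.Icc 1 n, Q i
      = (WithLp.toLp 2 ![p * (n - C) / 2, q * (n + C) / 2] : EuclideanSpace ℝ (Fin 2)) :=
  stmt_12_general a₁ a₂ ha₁ ha₂ h hh n φ ψ δ hφ hψ hδ M hM hMwrap chord J hJ hJoach ha L hL p q P hP
    N hN Q hQ C hC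
end

section
/- Under the billiard polygon setup with h the support function of an ellipse with a₁ ≠ a₂ and under the Joachimsthal hypothesis, let P = (p, q) ∈ ℝ² and let Qᵢ = P + (h(ψᵢ) − ⟨P, nᵢ⟩)·nᵢ, where nᵢ = (cos ψᵢ, sin ψᵢ), be the foot of the perpendicular from P to the tangent line to the ellipse at Mᵢ. Then Σ_{i=1}^{n} ‖P − Qᵢ‖² = L/(2J) + (p²·(n + C) + q²·(n − C))/2, where C = (L/J − n·(a₁² + a₂²))/(a₁² − a₂²). In particular, this sum depends only on P, n, J and L. -/
open Real

/-!
Write `n(θ) = (cos θ, sin θ)`, `t(θ) = (-sin θ, cos θ)`, so that `Mᵢ = h(ψᵢ) n(ψᵢ) + h'(ψᵢ) t(ψᵢ)`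
and the `i`-th side is `tᵢ t(φᵢ)`. Summation by parts around the closed polygon turns
`L = ∑ ⟪Mᵢ₊₁ - Mᵢ, t(φᵢ)⟫` into `∑ ⟪Mᵢ, t(φᵢ₋₁) - t(φᵢ)⟫ = ∑ 2 sin δᵢ h(ψᵢ)`, and the vanishing
normal components `⟪Mᵢ₊₁ - Mᵢ, n(φᵢ)⟫` into `∑ sin δᵢ h'(ψᵢ) = 0`. With `sin δᵢ = J h(ψᵢ)` this
gives `L = 2J ∑ h(ψᵢ)²` and, as `h h' = (a₂² - a₁²) sin cos`, `∑ sin ψᵢ cos ψᵢ = 0`; telescoping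
`t(φᵢ₋₁) - t(φᵢ) = 2 sin δᵢ n(ψᵢ)` gives `∑ h(ψᵢ) n(ψᵢ) = 0`. Hence the sum of
`‖P - Qᵢ‖² = (h(ψᵢ) - ⟪P, n(ψᵢ)⟫)²` is `L/(2J) + p² ∑ cos² ψᵢ + q² ∑ sin² ψᵢ`, and
`h² = a₁² cos² + a₂² sin²` identifies `C` with `∑ cos² ψᵢ - ∑ sin² ψᵢ`.
-/

open Finset

noncomputable def unitVec (θ : ℝ) : EuclideanSpace ℝ (Fin 2) := !₂[cos θ, sin θ]

noncomputable def unitVecPerp (θ : ℝ) : EuclideanSpace ℝ (Fin 2) := !₂[-sin θ, cos θ]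

section UnitVec

theorem inner_vec2 (a b c d : ℝ) :
    inner ℝ (!₂[a, b] : EuclideanSpace ℝ (Fin 2)) !₂[c, d] = a * c + b * d := by
  simp [EuclideanSpace.inner_toLp_toLp, mul_comm]

theorem norm_unitVec (θ : ℝ) : ‖unitVec θ‖ = 1 := by
  simp [unitVec, EuclideanSpace.norm_eq]

theorem norm_unitVecPerp (θ : ℝ) : ‖unitVecPerp θ‖ = 1 := by
  simp [unitVecPerp, EuclideanSpace.norm_eq]

theorem inner_unitVec_unitVecPerp (θ : ℝ) : inner ℝ (unitVec θ) (unitVecPerp θ) = 0 := by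
  rw [unitVec, unitVecPerp, inner_vec2]; ring

theorem unitVec_add_two_pi (θ : ℝ) : unitVec (θ + 2 * π) = unitVec θ := by
  simp [unitVec]

theorem unitVecPerp_add_two_pi (θ : ℝ) : unitVecPerp (θ + 2 * π) = unitVecPerp θ := by
  simp [unitVecPerp]

theorem unitVec_sub_sub_unitVec_add (ψ δ : ℝ) :
    unitVec (ψ - δ) - unitVec (ψ + δ) = -(2 * sin δ) • unitVecPerp ψ := by
  ext i; fin_cases i <;> simp [unitVec, unitVecPerp, sin_add, sin_sub, cos_add, cos_sub] <;> ring

theorem unitVecPerp_sub_sub_unitVecPerp_add (ψ δ : ℝ) :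
    unitVecPerp (ψ - δ) - unitVecPerp (ψ + δ) = (2 * sin δ) • unitVec ψ := by
  ext i; fin_cases i <;> simp [unitVec, unitVecPerp, sin_add, sin_sub, cos_add, cos_sub] <;> ring

theorem inner_frame_unitVec (a b θ : ℝ) :
    inner ℝ (a • unitVec θ + b • unitVecPerp θ) (unitVec θ) = a := by
  rw [inner_add_left, real_inner_smul_left, real_inner_smul_left, real_inner_self_eq_norm_sq,
    norm_unitVec, real_inner_comm, inner_unitVec_unitVecPerp]
  ring

theorem inner_frame_unitVecPerp (a b θ : ℝ) :
    inner ℝ (a • unitVec θ + b • unitVecPerp θ) (unitVecPerp θ) = b := by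
  rw [inner_add_left, real_inner_smul_left, real_inner_smul_left, real_inner_self_eq_norm_sq,
    norm_unitVecPerp, inner_unitVec_unitVecPerp]
  ring

theorem sum_inner_unitVec_sq {ι : Type*} (s : Finset ι) (θ : ι → ℝ) (p q : ℝ) :
    ∑ i ∈ s, inner ℝ (!₂[p, q] : EuclideanSpace ℝ (Fin 2)) (unitVec (θ i)) ^ 2
      = p ^ 2 * ∑ i ∈ s, cos (θ i) ^ 2 + q ^ 2 * ∑ i ∈ s, sin (θ i) ^ 2
        + 2 * p * q * ∑ i ∈ s, sin (θ i) * cos (θ i) := by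
  simp only [unitVec, inner_vec2, mul_sum, ← sum_add_distrib]
  exact sum_congr rfl fun i _ => by ring

end UnitVec

section Telescoping

theorem sum_Icc_one_sub_pred {G : Type*} [AddCommGroup G] (f : ℕ → G) (n : ℕ) :
    ∑ i ∈ Icc 1 n, (f i - f (i - 1)) = f n - f 0 := by
  induction n with
  | zero => simp
  | succ n ih => rw [sum_Icc_succ_top (by omega), ih]; simp

theorem sum_inner_sub_succ_eq_of_cyclic {E : Type*} [NormedAddCommGroup E]
    [InnerProductSpace ℝ E] {n : ℕ} {M w : ℕ → E} (hM : M (n + 1) = M 1) (hw : w n = w 0) :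
    ∑ i ∈ Icc 1 n, inner ℝ (M (i + 1) - M i) (w i)
      = ∑ i ∈ Icc 1 n, inner ℝ (M i) (w (i - 1) - w i) := by
  rw [← sub_eq_zero, ← sum_sub_distrib]
  calc ∑ i ∈ Icc 1 n, (inner ℝ (M (i + 1) - M i) (w i) - inner ℝ (M i) (w (i - 1) - w i))
      = ∑ i ∈ Icc 1 n, (inner ℝ (M (i + 1)) (w i) - inner ℝ (M (i - 1 + 1)) (w (i - 1))) :=
        sum_congr rfl fun i hi => by
          rw [Nat.sub_add_cancel (mem_Icc.1 hi).1, inner_sub_left, inner_sub_right]; ring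
    _ = 0 := by rw [sum_Icc_one_sub_pred (fun i => inner ℝ (M (i + 1)) (w i)), hM, hw, sub_self]

end Telescoping

section Polygon

variable {n : ℕ} {φ ψ δ : ℕ → ℝ}

theorem angle_pred_eq_sub_and_angle_eq_add
    (hψ : ∀ i ∈ Icc 1 n, ψ i = (φ (i - 1) + φ i) / 2)
    (hδ : ∀ i ∈ Icc 1 n, δ i = (φ i - φ (i - 1)) / 2) {i : ℕ} (hi : i ∈ Icc 1 n) :
    φ (i - 1) = ψ i - δ i ∧ φ i = ψ i + δ i := by
  constructor <;> linarith [hψ i hi, hδ i hi]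

theorem sum_two_sin_smul_unitVec_eq_zero (hφ : φ n = φ 0 + 2 * π)
    (hψ : ∀ i ∈ Icc 1 n, ψ i = (φ (i - 1) + φ i) / 2)
    (hδ : ∀ i ∈ Icc 1 n, δ i = (φ i - φ (i - 1)) / 2) :
    ∑ i ∈ Icc 1 n, (2 * sin (δ i)) • unitVec (ψ i) = 0 := by
  have hterm : ∀ i ∈ Icc 1 n, (2 * sin (δ i)) • unitVec (ψ i)
      = -(unitVecPerp (φ i) - unitVecPerp (φ (i - 1))) := fun i hi => by
    obtain ⟨hprev, hcur⟩ := angle_pred_eq_sub_and_angle_eq_add hψ hδ hi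
    rw [neg_sub, hprev, hcur, unitVecPerp_sub_sub_unitVecPerp_add]
  rw [sum_congr rfl hterm, sum_neg_distrib, sum_Icc_one_sub_pred (fun i => unitVecPerp (φ i)),
    hφ, unitVecPerp_add_two_pi, sub_self, neg_zero]

theorem sum_smul_unitVec_eq_zero_of_sin_eq_mul (hφ : φ n = φ 0 + 2 * π)
    (hψ : ∀ i ∈ Icc 1 n, ψ i = (φ (i - 1) + φ i) / 2)
    (hδ : ∀ i ∈ Icc 1 n, δ i = (φ i - φ (i - 1)) / 2) {c : ℕ → ℝ} {J : ℝ} (hJ : J ≠ 0)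
    (hc : ∀ i ∈ Icc 1 n, sin (δ i) = J * c i) :
    ∑ i ∈ Icc 1 n, c i • unitVec (ψ i) = 0 := by
  have := sum_two_sin_smul_unitVec_eq_zero hφ hψ hδ
  rw [sum_congr rfl fun i hi => by rw [hc i hi, ← mul_assoc, mul_smul], ← smul_sum] at this
  exact (smul_eq_zero.1 this).resolve_left (mul_ne_zero two_ne_zero hJ)

variable {M : ℕ → EuclideanSpace ℝ (Fin 2)} {a b : ℕ → ℝ}

theorem sum_norm_chord_eq (hφ : φ n = φ 0 + 2 * π)
    (hψ : ∀ i ∈ Icc 1 n, ψ i = (φ (i - 1) + φ i) / 2)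
    (hδ : ∀ i ∈ Icc 1 n, δ i = (φ i - φ (i - 1)) / 2)
    (hM : ∀ i ∈ Icc 1 n, M i = a i • unitVec (ψ i) + b i • unitVecPerp (ψ i))
    (hMwrap : M (n + 1) = M 1)
    (chord : ∀ i ∈ Icc 1 n, ∃ t : ℝ, 0 < t ∧ M (i + 1) - M i = t • unitVecPerp (φ i)) :
    ∑ i ∈ Icc 1 n, ‖M (i + 1) - M i‖ = ∑ i ∈ Icc 1 n, 2 * sin (δ i) * a i := by
  calc ∑ i ∈ Icc 1 n, ‖M (i + 1) - M i‖
      = ∑ i ∈ Icc 1 n, inner ℝ (M (i + 1) - M i) (unitVecPerp (φ i)) :=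
        sum_congr rfl fun i hi => by
          obtain ⟨t, ht, hchord⟩ := chord i hi
          rw [hchord, norm_smul, real_inner_smul_left, real_inner_self_eq_norm_sq,
            norm_unitVecPerp, Real.norm_of_nonneg ht.le]
          ring
    _ = ∑ i ∈ Icc 1 n, inner ℝ (M i) (unitVecPerp (φ (i - 1)) - unitVecPerp (φ i)) :=
        sum_inner_sub_succ_eq_of_cyclic hMwrap (by rw [hφ, unitVecPerp_add_two_pi])
    _ = ∑ i ∈ Icc 1 n, 2 * sin (δ i) * a i := sum_congr rfl fun i hi => by
        obtain ⟨hprev, hcur⟩ := angle_pred_eq_sub_and_angle_eq_add hψ hδ hi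
        rw [hprev, hcur, unitVecPerp_sub_sub_unitVecPerp_add, hM i hi, real_inner_smul_right,
          inner_frame_unitVec]

theorem sum_sin_mul_eq_zero (hφ : φ n = φ 0 + 2 * π)
    (hψ : ∀ i ∈ Icc 1 n, ψ i = (φ (i - 1) + φ i) / 2)
    (hδ : ∀ i ∈ Icc 1 n, δ i = (φ i - φ (i - 1)) / 2)
    (hM : ∀ i ∈ Icc 1 n, M i = a i • unitVec (ψ i) + b i • unitVecPerp (ψ i))
    (hMwrap : M (n + 1) = M 1)
    (chord : ∀ i ∈ Icc 1 n, ∃ t : ℝ, M (i + 1) - M i = t • unitVecPerp (φ i)) :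
    ∑ i ∈ Icc 1 n, sin (δ i) * b i = 0 := by
  have hperp : ∑ i ∈ Icc 1 n, inner ℝ (M (i + 1) - M i) (unitVec (φ i)) = 0 :=
    sum_eq_zero fun i hi => by
      obtain ⟨t, hchord⟩ := chord i hi
      rw [hchord, real_inner_smul_left, real_inner_comm, inner_unitVec_unitVecPerp, mul_zero]
  rw [sum_inner_sub_succ_eq_of_cyclic hMwrap (by rw [hφ, unitVec_add_two_pi])] at hperp
  have hterm : ∀ i ∈ Icc 1 n,
      inner ℝ (M i) (unitVec (φ (i - 1)) - unitVec (φ i)) = -2 * (sin (δ i) * b i) :=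
    fun i hi => by
      obtain ⟨hprev, hcur⟩ := angle_pred_eq_sub_and_angle_eq_add hψ hδ hi
      rw [hprev, hcur, unitVec_sub_sub_unitVec_add, hM i hi, real_inner_smul_right,
        inner_frame_unitVecPerp]
      ring
  rw [sum_congr rfl hterm, ← mul_sum] at hperp
  simpa using hperp

end Polygon

section EllipseSupport

variable {a₁ a₂ : ℝ} {h : ℝ → ℝ}

theorem sq_of_eq_ellipse_support
    (hh : ∀ x : ℝ, h x = √(a₁ ^ 2 * cos x ^ 2 + a₂ ^ 2 * sin x ^ 2)) (x : ℝ) :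
    h x ^ 2 = a₁ ^ 2 * cos x ^ 2 + a₂ ^ 2 * sin x ^ 2 := by
  rw [hh, sq_sqrt (by positivity)]

theorem mul_deriv_of_eq_ellipse_support (ha₁ : a₁ ≠ 0) (ha₂ : a₂ ≠ 0)
    (hh : ∀ x : ℝ, h x = √(a₁ ^ 2 * cos x ^ 2 + a₂ ^ 2 * sin x ^ 2)) (x : ℝ) :
    h x * deriv h x = (a₂ ^ 2 - a₁ ^ 2) * (sin x * cos x) := by
  have hpos : 0 < a₁ ^ 2 * cos x ^ 2 + a₂ ^ 2 * sin x ^ 2 := by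
    have hmin : 0 < min (a₁ ^ 2) (a₂ ^ 2) := lt_min (by positivity) (by positivity)
    calc 0 < min (a₁ ^ 2) (a₂ ^ 2) * (cos x ^ 2 + sin x ^ 2) := by
          rw [cos_sq_add_sin_sq, mul_one]; exact hmin
      _ ≤ a₁ ^ 2 * cos x ^ 2 + a₂ ^ 2 * sin x ^ 2 := by
          rw [mul_add]
          gcongr
          exacts [min_le_left _ _, min_le_right _ _]
  have hderiv : HasDerivAt (fun y => a₁ ^ 2 * cos y ^ 2 + a₂ ^ 2 * sin y ^ 2)
      (2 * ((a₂ ^ 2 - a₁ ^ 2) * (sin x * cos x))) x := by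
    refine ((((hasDerivAt_cos x).pow 2).const_mul (a₁ ^ 2)).add
      (((hasDerivAt_sin x).pow 2).const_mul (a₂ ^ 2))).congr_deriv ?_
    push_cast; ring
  rw [funext hh, (hderiv.sqrt hpos.ne').deriv]
  field_simp

theorem two_mul_sum_sq_sub_div_eq {ι : Type*} (hsq : a₁ ^ 2 ≠ a₂ ^ 2)
    (hh : ∀ x : ℝ, h x = √(a₁ ^ 2 * cos x ^ 2 + a₂ ^ 2 * sin x ^ 2)) (s : Finset ι) (θ : ι → ℝ) :
    (2 * ∑ i ∈ s, h (θ i) ^ 2 - #s * (a₁ ^ 2 + a₂ ^ 2)) / (a₁ ^ 2 - a₂ ^ 2)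
      = ∑ i ∈ s, cos (θ i) ^ 2 - ∑ i ∈ s, sin (θ i) ^ 2 := by
  have hcard : (#s : ℝ) = ∑ i ∈ s, cos (θ i) ^ 2 + ∑ i ∈ s, sin (θ i) ^ 2 := by
    simp [← sum_add_distrib]
  rw [div_eq_iff (sub_ne_zero.2 hsq), hcard]
  simp only [sq_of_eq_ellipse_support hh, sum_add_distrib, ← mul_sum]
  ring

end EllipseSupport

section FootOfPerpendicular

variable {E : Type*} [NormedAddCommGroup E] [InnerProductSpace ℝ E]

theorem norm_sub_add_smul_sq (P u : E) (hu : ‖u‖ = 1) (c : ℝ) :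
    ‖P - (P + (c - inner ℝ P u) • u)‖ ^ 2 = (c - inner ℝ P u) ^ 2 := by
  rw [sub_add_cancel_left, norm_neg, norm_smul, hu, mul_one, Real.norm_eq_abs, sq_abs]

theorem sum_sq_sub_inner {ι : Type*} (s : Finset ι) (c : ι → ℝ) (u : ι → E) (P : E) :
    ∑ i ∈ s, (c i - inner ℝ P (u i)) ^ 2
      = ∑ i ∈ s, c i ^ 2 - 2 * inner ℝ P (∑ i ∈ s, c i • u i)
        + ∑ i ∈ s, inner ℝ P (u i) ^ 2 := by
  rw [inner_sum, mul_sum, ← sum_sub_distrib, ← sum_add_distrib]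
  exact sum_congr rfl fun i _ => by rw [real_inner_smul_right]; ring

end FootOfPerpendicular

theorem stmt_13_general
    (a₁ a₂ : ℝ) (ha₁ : 0 < a₁) (ha₂ : 0 < a₂)
    (h : ℝ → ℝ)
    (hh : ∀ x : ℝ, h x = Real.sqrt (a₁ ^ 2 * Real.cos x ^ 2 + a₂ ^ 2 * Real.sin x ^ 2))
    (n : ℕ)
    (φ ψ δ : ℕ → ℝ)
    (hφ : φ n = φ 0 + 2 * Real.pi)
    (hψ : ∀ i ∈ Finset.Icc 1 n, ψ i = (φ (i - 1) + φ i) / 2)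
    (hδ : ∀ i ∈ Finset.Icc 1 n, δ i = (φ i - φ (i - 1)) / 2)
    (M : ℕ → EuclideanSpace ℝ (Fin 2))
    (hM : ∀ i ∈ Finset.Icc 1 n, M i
        = h (ψ i) • (!₂[Real.cos (ψ i), Real.sin (ψ i)] : EuclideanSpace ℝ (Fin 2))
        + deriv h (ψ i) • (!₂[-Real.sin (ψ i), Real.cos (ψ i)] : EuclideanSpace ℝ (Fin 2)))
    (hMwrap : M (n + 1) = M 1)
    (chord : ∀ i ∈ Finset.Icc 1 n, ∃ t : ℝ, 0 < t ∧
        M (i + 1) - M i = t • (!₂[-Real.sin (φ i), Real.cos (φ i)] : EuclideanSpace ℝ (Fin 2)))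
    (J : ℝ) (hJ : 0 < J)
    (hJoach : ∀ i ∈ Finset.Icc 1 n, Real.sin (δ i) = J * h (ψ i))
    (ha : a₁ ≠ a₂)
    (L : ℝ) (hL : L = ∑ i ∈ Finset.Icc 1 n, ‖M (i + 1) - M i‖)
    (p q : ℝ) (P : EuclideanSpace ℝ (Fin 2)) (hP : P = !₂[p, q])
    (N : ℕ → EuclideanSpace ℝ (Fin 2))
    (hN : ∀ i ∈ Finset.Icc 1 n, N i = !₂[Real.cos (ψ i), Real.sin (ψ i)])
    (Q : ℕ → EuclideanSpace ℝ (Fin 2))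
    (hQ : ∀ i ∈ Finset.Icc 1 n, Q i = P + (h (ψ i) - (inner ℝ P (N i) : ℝ)) • N i)
    (C : ℝ) (hC : C = (L / J - n * (a₁ ^ 2 + a₂ ^ 2)) / (a₁ ^ 2 - a₂ ^ 2))
    : ∑ i ∈ Finset.Icc 1 n, ‖P - Q i‖ ^ 2
      = L / (2 * J) + (p ^ 2 * (n + C) + q ^ 2 * (n - C)) / 2 := by
  have hframe : ∀ i ∈ Icc 1 n,
      M i = h (ψ i) • unitVec (ψ i) + deriv h (ψ i) • unitVecPerp (ψ i) := hM
  have hchord : ∀ i ∈ Icc 1 n, ∃ t : ℝ, 0 < t ∧ M (i + 1) - M i = t • unitVecPerp (φ i) := chord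
  have hsq : a₁ ^ 2 ≠ a₂ ^ 2 := fun heq => ha ((sq_eq_sq₀ ha₁.le ha₂.le).1 heq)
  have hperimeter : L / (2 * J) = ∑ i ∈ Icc 1 n, h (ψ i) ^ 2 := by
    rw [hL, sum_norm_chord_eq hφ hψ hδ hframe hMwrap hchord, div_eq_iff (by positivity), sum_mul]
    exact sum_congr rfl fun i hi => by rw [hJoach i hi]; ring
  have hreflect : ∑ i ∈ Icc 1 n, sin (ψ i) * cos (ψ i) = 0 := by
    have := sum_sin_mul_eq_zero hφ hψ hδ hframe hMwrap
      fun i hi => (hchord i hi).imp fun _ ht => ht.2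
    rw [sum_congr rfl fun i hi => by rw [hJoach i hi, mul_assoc,
      mul_deriv_of_eq_ellipse_support ha₁.ne' ha₂.ne' hh], ← mul_sum, ← mul_sum] at this
    exact (mul_eq_zero.1 ((mul_eq_zero.1 this).resolve_left hJ.ne')).resolve_left
      (sub_ne_zero.2 hsq.symm)
  have hcentroid : ∑ i ∈ Icc 1 n, h (ψ i) • unitVec (ψ i) = 0 :=
    sum_smul_unitVec_eq_zero_of_sin_eq_mul hφ hψ hδ hJ.ne' hJoach
  have hC' : C = ∑ i ∈ Icc 1 n, cos (ψ i) ^ 2 - ∑ i ∈ Icc 1 n, sin (ψ i) ^ 2 := by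
    rw [hC, ← two_mul_sum_sq_sub_div_eq hsq hh, ← hperimeter, Nat.card_Icc, Nat.add_sub_cancel]
    field_simp
  have hcard : (n : ℝ) = ∑ i ∈ Icc 1 n, cos (ψ i) ^ 2 + ∑ i ∈ Icc 1 n, sin (ψ i) ^ 2 := by
    simp [← sum_add_distrib]
  calc ∑ i ∈ Icc 1 n, ‖P - Q i‖ ^ 2
      = ∑ i ∈ Icc 1 n, (h (ψ i) - inner ℝ P (unitVec (ψ i))) ^ 2 :=
        sum_congr rfl fun i hi => by
          rw [hQ i hi, hN i hi]; exact norm_sub_add_smul_sq _ _ (norm_unitVec _) _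
    _ = _ := by
      rw [sum_sq_sub_inner, hcentroid, inner_zero_right, hP, sum_inner_unitVec_sq, hreflect,
        hperimeter, hC', hcard]
      ring

/-- Sum of squared distances from a point `P = (p,q)` to the tangent lines: `∑ ‖P - Qᵢ‖² = L/(2J) + (p²(n+C) + q²(n-C))/2`. -/
theorem stmt_13
    (a₁ a₂ : ℝ) (ha₁ : 0 < a₁) (ha₂ : 0 < a₂)
    (h : ℝ → ℝ)
    (hh : ∀ x : ℝ, h x = Real.sqrt (a₁ ^ 2 * Real.cos x ^ 2 + a₂ ^ 2 * Real.sin x ^ 2))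
    (n : ℕ) (hn : 2 ≤ n)
    (φ ψ δ : ℕ → ℝ)
    (hφ : φ n = φ 0 + 2 * Real.pi)
    (hψ : ∀ i ∈ Finset.Icc 1 n, ψ i = (φ (i - 1) + φ i) / 2)
    (hδ : ∀ i ∈ Finset.Icc 1 n, δ i = (φ i - φ (i - 1)) / 2)
    (M : ℕ → EuclideanSpace ℝ (Fin 2))
    (hM : ∀ i ∈ Finset.Icc 1 n, M i
        = h (ψ i) • (!₂[Real.cos (ψ i), Real.sin (ψ i)] : EuclideanSpace ℝ (Fin 2))
        + deriv h (ψ i) • (!₂[-Real.sin (ψ i), Real.cos (ψ i)] : EuclideanSpace ℝ (Fin 2)))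
    (hMwrap : M (n + 1) = M 1)
    (chord : ∀ i ∈ Finset.Icc 1 n, ∃ t : ℝ, 0 < t ∧
        M (i + 1) - M i = t • (!₂[-Real.sin (φ i), Real.cos (φ i)] : EuclideanSpace ℝ (Fin 2)))
    (J : ℝ) (hJ : 0 < J)
    (hJoach : ∀ i ∈ Finset.Icc 1 n, Real.sin (δ i) = J * h (ψ i))
    (ha : a₁ ≠ a₂)
    (L : ℝ) (hL : L = ∑ i ∈ Finset.Icc 1 n, ‖M (i + 1) - M i‖)
    (p q : ℝ) (P : EuclideanSpace ℝ (Fin 2)) (hP : P = !₂[p, q])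
    (N : ℕ → EuclideanSpace ℝ (Fin 2))
    (hN : ∀ i ∈ Finset.Icc 1 n, N i = !₂[Real.cos (ψ i), Real.sin (ψ i)])
    (Q : ℕ → EuclideanSpace ℝ (Fin 2))
    (hQ : ∀ i ∈ Finset.Icc 1 n, Q i = P + (h (ψ i) - (inner ℝ P (N i) : ℝ)) • N i)
    (C : ℝ) (hC : C = (L / J - n * (a₁ ^ 2 + a₂ ^ 2)) / (a₁ ^ 2 - a₂ ^ 2))
    : ∑ i ∈ Finset.Icc 1 n, ‖P - Q i‖ ^ 2
      = L / (2 * J) + (p ^ 2 * (n + C) + q ^ 2 * (n - C)) / 2 :=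
  stmt_13_general a₁ a₂ ha₁ ha₂ h hh n φ ψ δ hφ hψ hδ M hM hMwrap chord J hJ hJoach ha L hL p q P hP
    N hN Q hQ C hC
end
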